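/- Let N ≥ 2 and let φ : ℝ → ℝ be continuously differentiable with compact support contained in (0,1). Then Σ_{i=1}^{N−1} (φ̄_{i+1} − φ̄_i)² ≤ (1/N) ∫_0^1 φ'(x)² dx, where φ̄_i = N ∫_{i/N − 1/(2N)}^{i/N + 1/(2N)} φ(x) dx. -/

import Mathlib

/-!
Write `h = 1/(2N)`. Each local average is `N ∫_{-h}^{h} φ(y + j/N) dy`, so
`φ̄_{i+1} - φ̄_i = N ∫_{-h}^{h} (φ(y + (i+1)/N) - φ(y + i/N)) dy`. Cauchy–Schwarz on this
window of length `1/N`, followed by Cauchy–Schwarz for `φ(b) - φ(a) = ∫_a^b φ'` on the step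
of length `1/N`, bounds `(φ̄_{i+1} - φ̄_i)²` by the `y`-integral over the window of
`∫_{y+i/N}^{y+(i+1)/N} φ'²`. For each `y` these intervals are adjacent, so their sum over
`i` is at most `∫₀¹ φ'²`, because `φ'` vanishes outside `(0,1)`; integrating over the window
gives the factor `1/N`.
-/

open MeasureTheory intervalIntegral Finset

/-- The local average `φ̄_i = N ∫_{i/N - 1/(2N)}^{i/N + 1/(2N)} φ(x) dx` of `φ` over the
interval of center `i/N` and length `1/N`. -/
noncomputable def localAvg (N : ℕ) (φ : ℝ → ℝ) (i : ℕ) : ℝ :=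
  (N : ℝ) * ∫ x in ((i : ℝ) / N - 1 / (2 * N))..((i : ℝ) / N + 1 / (2 * N)), φ x

theorem sq_integral_le_measureReal_mul_integral_sq {α : Type*} [MeasurableSpace α]
    {μ : Measure α} [IsFiniteMeasure μ] {f : α → ℝ} (hf : Integrable f μ)
    (hf2 : Integrable (fun x ↦ f x ^ 2) μ) :
    (∫ x, f x ∂μ) ^ 2 ≤ μ.real Set.univ * ∫ x, f x ^ 2 ∂μ := by
  rcases eq_zero_or_neZero μ with rfl | _
  · simp
  have jensen : (⨍ x, f x ∂μ) ^ 2 ≤ ⨍ x, f x ^ 2 ∂μ :=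
    (even_two.convexOn_pow (𝕜 := ℝ)).map_average_le (continuous_pow 2).continuousOn
      isClosed_univ (by simp) hf hf2
  have hm : 0 < μ.real Set.univ := measureReal_univ_pos
  rw [average_eq, average_eq, smul_eq_mul, smul_eq_mul, mul_pow] at jensen
  field_simp at jensen
  nlinarith

theorem sq_intervalIntegral_le_mul_integral_sq {f : ℝ → ℝ} {a b : ℝ} (hab : a ≤ b)
    (hf : ContinuousOn f (Set.Icc a b)) :
    (∫ x in a..b, f x) ^ 2 ≤ (b - a) * ∫ x in a..b, f x ^ 2 := by
  have hint := (hf.integrableOn_Icc (μ := volume)).mono_set Set.Ioc_subset_Icc_self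
  have hint2 := ((hf.pow 2).integrableOn_Icc (μ := volume)).mono_set Set.Ioc_subset_Icc_self
  simpa [integral_of_le hab, hab] using sq_integral_le_measureReal_mul_integral_sq hint hint2

theorem sq_sub_le_mul_integral_sq_deriv {φ : ℝ → ℝ} (hφ : ContDiff ℝ 1 φ) {a b : ℝ}
    (hab : a ≤ b) : (φ b - φ a) ^ 2 ≤ (b - a) * ∫ x in a..b, deriv φ x ^ 2 := by
  have hφ' := hφ.continuous_deriv le_rfl
  rw [← integral_deriv_eq_sub (fun x _ ↦ hφ.differentiable one_ne_zero x)
    (hφ'.intervalIntegrable a b)]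
  exact sq_intervalIntegral_le_mul_integral_sq hab hφ'.continuousOn

theorem intervalIntegral_le_of_support_subset {f : ℝ → ℝ} {a b c d : ℝ} (hf0 : 0 ≤ f)
    (hf : IntegrableOn f (Set.Ioc c d)) (hsupp : Function.support f ⊆ Set.Ioc c d)
    (hab : a ≤ b) (hcd : c ≤ d) : ∫ x in a..b, f x ≤ ∫ x in c..d, f x := by
  rw [integral_of_le hab, integral_of_le hcd,
    setIntegral_eq_integral_of_forall_compl_eq_zero fun x hx ↦ Function.notMem_support.mp
      fun h ↦ hx (hsupp h)]
  exact setIntegral_le_integral ((integrableOn_iff_integrable_of_support_subset hsupp).mp hf)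
    (ae_of_all _ hf0)

theorem sum_integral_adjacent_intervals_div {f : ℝ → ℝ} (hf : Continuous f) {N : ℕ}
    (hN : 0 < N) :
    ∑ i ∈ Icc 1 (N - 1), ∫ u in (i / N : ℝ)..(i + 1 : ℕ) / N, f u =
      ∫ u in (1 / N : ℝ)..1, f u := by
  rw [Finset.Icc_sub_one_right_eq_Ico_of_not_isMin (by simpa using hN.ne'),
    sum_integral_adjacent_intervals_Ico (a := fun k : ℕ ↦ (k / N : ℝ)) hN
      (fun k _ ↦ hf.intervalIntegrable _ _)]
  simp [hN.ne']

theorem continuous_intervalIntegral_comp_add {f : ℝ → ℝ} (hf : Continuous f) (a b : ℝ) :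
    Continuous fun y ↦ ∫ u in a..b, f (y + u) :=
  continuous_parametric_intervalIntegral_of_continuous' (by fun_prop) a b

theorem localAvg_eq_mul_integral_comp_add (N : ℕ) (φ : ℝ → ℝ) (j : ℕ) :
    localAvg N φ j = N * ∫ y in -(1 / (2 * N))..1 / (2 * N), φ (y + j / N) := by
  rw [localAvg, integral_comp_add_right]
  congr 2 <;> ring

theorem localAvg_succ_sub_eq (N : ℕ) {φ : ℝ → ℝ} (hφ : Continuous φ) (i : ℕ) :
    localAvg N φ (i + 1) - localAvg N φ i =
      N * ∫ y in -(1 / (2 * N))..1 / (2 * N), (φ (y + (i + 1 : ℕ) / N) - φ (y + i / N)) := by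
  rw [localAvg_eq_mul_integral_comp_add, localAvg_eq_mul_integral_comp_add, ← mul_sub,
    intervalIntegral.integral_sub ((by fun_prop : Continuous _).intervalIntegrable _ _)
      ((by fun_prop : Continuous _).intervalIntegrable _ _)]

theorem sq_localAvg_succ_sub_le {N : ℕ} (hN : 0 < N) {φ : ℝ → ℝ} (hφ : ContDiff ℝ 1 φ)
    (i : ℕ) :
    (localAvg N φ (i + 1) - localAvg N φ i) ^ 2 ≤
      ∫ y in -(1 / (2 * N))..1 / (2 * N), ∫ u in (i / N : ℝ)..(i + 1 : ℕ) / N,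
        deriv φ (y + u) ^ 2 := by
  have hφ' := hφ.continuous_deriv le_rfl
  have hh : (0 : ℝ) < 1 / (2 * N) := by positivity
  have hwidth : 1 / (2 * N) - -(1 / (2 * N)) = (1 / N : ℝ) := by ring
  set h : ℝ := 1 / (2 * N)
  set g : ℝ → ℝ := fun y ↦ φ (y + (i + 1 : ℕ) / N) - φ (y + i / N)
  set S : ℝ → ℝ := fun y ↦ ∫ u in (i / N : ℝ)..(i + 1 : ℕ) / N, deriv φ (y + u) ^ 2
  have hg : Continuous g := by fun_prop
  have hS : Continuous S := continuous_intervalIntegral_comp_add (hφ'.pow 2) _ _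
  have hgS : ∀ y, g y ^ 2 ≤ 1 / N * S y := fun y ↦ by
    have hle : y + (i : ℝ) / N ≤ y + (i + 1 : ℕ) / N := by gcongr; exact_mod_cast i.le_succ
    have hstep : y + (i + 1 : ℕ) / N - (y + i / N) = 1 / N := by push_cast; ring
    have := sq_sub_le_mul_integral_sq_deriv hφ hle
    rwa [hstep, ← integral_comp_add_left] at this
  have hcs := sq_intervalIntegral_le_mul_integral_sq (neg_le_self hh.le) hg.continuousOn
  rw [hwidth] at hcs
  rw [localAvg_succ_sub_eq N hφ.continuous]
  calc (N * ∫ y in -h..h, g y) ^ 2 = N ^ 2 * (∫ y in -h..h, g y) ^ 2 := mul_pow _ _ _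
    _ ≤ N ^ 2 * (1 / N * ∫ y in -h..h, g y ^ 2) := by gcongr
    _ ≤ N ^ 2 * (1 / N * ∫ y in -h..h, 1 / N * S y) := by
      gcongr
      exact integral_mono_on (neg_le_self hh.le) ((hg.pow 2).intervalIntegrable _ _)
        ((continuous_const.mul hS).intervalIntegrable _ _) fun y _ ↦ hgS y
    _ = ∫ y in -h..h, S y := by
      rw [intervalIntegral.integral_const_mul]; field_simp

theorem sum_integral_sq_deriv_comp_add_le {φ : ℝ → ℝ} (hφ : ContDiff ℝ 1 φ)
    (hsupp : tsupport φ ⊆ Set.Ioo (0 : ℝ) 1) {N : ℕ} (hN : 0 < N) (y : ℝ) :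
    ∑ i ∈ Icc 1 (N - 1), ∫ u in (i / N : ℝ)..(i + 1 : ℕ) / N, deriv φ (y + u) ^ 2
      ≤ ∫ x in (0 : ℝ)..1, deriv φ x ^ 2 := by
  have hψ : Continuous fun x ↦ deriv φ x ^ 2 := (hφ.continuous_deriv le_rfl).pow 2
  have hψ_supp : Function.support (fun x ↦ deriv φ x ^ 2) ⊆ Set.Ioc 0 1 := by
    rw [Function.support_pow _ two_ne_zero]
    exact (support_deriv_subset.trans hsupp).trans Set.Ioo_subset_Ioc_self
  have hN1 : (1 : ℝ) / N ≤ 1 := by rw [div_le_one (by positivity)]; exact_mod_cast hN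
  rw [sum_integral_adjacent_intervals_div (by fun_prop) hN,
    integral_comp_add_left (fun x ↦ deriv φ x ^ 2)]
  exact intervalIntegral_le_of_support_subset (fun x ↦ sq_nonneg _) hψ.integrableOn_Ioc
    hψ_supp (by linarith) zero_le_one

theorem sum_sq_localAvg_diff_le_general
    (N : ℕ) (φ : ℝ → ℝ)
    (hφ : ContDiff ℝ 1 φ)
    (hsupp : tsupport φ ⊆ Set.Ioo (0 : ℝ) 1) :
    ∑ i ∈ Finset.Icc 1 (N - 1), (localAvg N φ (i + 1) - localAvg N φ i) ^ 2
      ≤ (1 / (N : ℝ)) * ∫ x in (0:ℝ)..1, (deriv φ x) ^ 2 := by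
  obtain rfl | hN := N.eq_zero_or_pos
  · simp
  set S : ℕ → ℝ → ℝ := fun i y ↦
    ∫ u in (i / N : ℝ)..(i + 1 : ℕ) / N, deriv φ (y + u) ^ 2
  have hS : ∀ i, Continuous (S i) := fun i ↦
    continuous_intervalIntegral_comp_add ((hφ.continuous_deriv le_rfl).pow 2) _ _
  have hh : (0 : ℝ) ≤ 1 / (2 * N) := by positivity
  calc _ ≤ ∑ i ∈ Icc 1 (N - 1), ∫ y in -(1 / (2 * N))..1 / (2 * N), S i y :=
        sum_le_sum fun i _ ↦ sq_localAvg_succ_sub_le hN hφ i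
    _ = ∫ y in -(1 / (2 * N))..1 / (2 * N), ∑ i ∈ Icc 1 (N - 1), S i y :=
        (integral_finsetSum fun i _ ↦ (hS i).intervalIntegrable _ _).symm
    _ ≤ ∫ _ in -(1 / (2 * N))..1 / (2 * N), ∫ x in (0 : ℝ)..1, deriv φ x ^ 2 :=
        integral_mono_on (neg_le_self hh)
          ((continuous_finsetSum _ fun i _ ↦ hS i).intervalIntegrable _ _)
          intervalIntegrable_const fun y _ ↦ sum_integral_sq_deriv_comp_add_le hφ hsupp hN y
    _ = _ := by rw [intervalIntegral.integral_const, smul_eq_mul]; ring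

/-- for `N ≥ 2` and `φ` continuously differentiable with compact support
contained in `(0,1)`, one has `Σ_{i=1}^{N-1} (φ̄_{i+1} - φ̄_i)² ≤ (1/N) ∫₀¹ φ'(x)² dx`. -/
theorem sum_sq_localAvg_diff_le
    (N : ℕ) (hN : 2 ≤ N) (φ : ℝ → ℝ)
    (hφ : ContDiff ℝ 1 φ)
    (hsupp : tsupport φ ⊆ Set.Ioo (0 : ℝ) 1) :
    ∑ i ∈ Finset.Icc 1 (N - 1), (localAvg N φ (i + 1) - localAvg N φ i) ^ 2
      ≤ (1 / (N : ℝ)) * ∫ x in (0:ℝ)..1, (deriv φ x) ^ 2 :=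
  sum_sq_localAvg_diff_le_general N φ hφ hsupp
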